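/- arXiv:1711.04604 — 4 statements merged into one kernel-verified Lean document; each statement's English description precedes it below -/
import Mathlib

section
/- Let G=(V,E) be a finite undirected graph. There exists an optimal half-integral solution x ∈ {0, 1/2, 1}^V to the LP relaxation of Independent Set on G (maximize Σ x_v subject to x_u + x_v ≤ 1 for every edge {u,v} and 0 ≤ x_v ≤ 1) such that for every maximum independent set I of G it holds that V_1^x ⊆ I ⊆ V \ V_0^x, where V_i^x = {v ∈ V : x_v = i}. -/
attribute [local instance] Classical.propDecidable

namespace VCKernel

variable {V : Type*} [Fintype V] [DecidableEq V]

/-- `S` is an independent set of `G`. -/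
def IsIndep (G : SimpleGraph V) (S : Finset V) : Prop :=
  ∀ u ∈ S, ∀ v ∈ S, ¬ G.Adj u v

/-- Independence number of the subgraph of `G` induced on the vertex set `A`. -/
noncomputable def alphaOn (G : SimpleGraph V) (A : Set V) : ℕ :=
  sSup {n | ∃ S : Finset V, ↑S ⊆ A ∧ IsIndep G S ∧ S.card = n}

/-- Independence number `α(G)`. -/
noncomputable def alpha (G : SimpleGraph V) : ℕ := alphaOn G Set.univ

/-- `Y` is a blocking set: deleting it decreases the independence number. -/
def IsBlocking (G : SimpleGraph V) (Y : Finset V) : Prop :=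
  alphaOn G (Set.univ \ ↑Y) < alpha G

/-- `Y` is a minimal blocking set. -/
def IsMinBlocking (G : SimpleGraph V) (Y : Finset V) : Prop :=
  IsBlocking G Y ∧ ∀ Y' ⊂ Y, ¬ IsBlocking G Y'

/-- Open neighborhood of the vertex set `X'` in `G`. -/
def nbhd (G : SimpleGraph V) (X' : Finset V) : Set V :=
  {v | ∃ u ∈ X', G.Adj u v}

/-- Number of conflicts induced by `X'` on the induced subgraph with vertex set `A`. -/
noncomputable def conf (G : SimpleGraph V) (A : Set V) (X' : Finset V) : ℕ :=
  alphaOn G A - alphaOn G (A \ nbhd G X')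

/-- `C` is (the vertex set of) a connected component of the subgraph of `G`
induced on `A`. -/
def IsCompOf (G : SimpleGraph V) (A C : Set V) : Prop :=
  C ⊆ A ∧ (G.induce C).Connected ∧ ∀ u ∈ C, ∀ v ∈ A, G.Adj u v → v ∈ C

/-- Feasible solution to the Independent Set LP of the subgraph induced on `A`. -/
def FeasISOn (G : SimpleGraph V) (A : Set V) (x : V → ℝ) : Prop :=
  (∀ v ∈ A, 0 ≤ x v ∧ x v ≤ 1) ∧
    ∀ u ∈ A, ∀ v ∈ A, G.Adj u v → x u + x v ≤ 1

/-- Half-integrality on `A`. -/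
def HalfIntOn (A : Set V) (x : V → ℝ) : Prop :=
  ∀ v ∈ A, x v = 0 ∨ x v = 1/2 ∨ x v = 1

/-- Objective value of an LP solution on vertex set `A`. -/
noncomputable def weightOn (A : Set V) (x : V → ℝ) : ℝ :=
  ∑ v, if v ∈ A then x v else 0

/-- `x` is an optimum half-integral solution to the Independent Set LP
of the subgraph induced on `A`. -/
def OptHIOn (G : SimpleGraph V) (A : Set V) (x : V → ℝ) : Prop :=
  FeasISOn G A x ∧ HalfIntOn A x ∧
    ∀ y : V → ℝ, FeasISOn G A y → HalfIntOn A y → weightOn A y ≤ weightOn A x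

/-- Feasible solution to the Vertex Cover LP of `G`. -/
def FeasVC (G : SimpleGraph V) (x : V → ℝ) : Prop :=
  (∀ v, 0 ≤ x v ∧ x v ≤ 1) ∧ ∀ u v, G.Adj u v → 1 ≤ x u + x v

/-- Optimum value of the Independent Set LP of `G`. -/
noncomputable def lpIS (G : SimpleGraph V) : ℝ :=
  sSup {w | ∃ x : V → ℝ, FeasISOn G Set.univ x ∧ w = ∑ v, x v}

/-- Optimum value of the Vertex Cover LP of `G`. -/
noncomputable def lpVC (G : SimpleGraph V) : ℝ :=
  sInf {w | ∃ x : V → ℝ, FeasVC G x ∧ w = ∑ v, x v}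

/-- `C` is a vertex cover of `G`. -/
def IsVC (G : SimpleGraph V) (C : Finset V) : Prop :=
  ∀ u v, G.Adj u v → u ∈ C ∨ v ∈ C

/-- Vertex cover number of `G`. -/
noncomputable def vcNum (G : SimpleGraph V) : ℕ :=
  sInf {n | ∃ C : Finset V, IsVC G C ∧ C.card = n}

/-- `Z` is a feedback vertex set of `G`. -/
def IsFVS (G : SimpleGraph V) (Z : Finset V) : Prop :=
  (G.induce ((↑Z : Set V)ᶜ)).IsAcyclic

/-- `Z` is an odd cycle transversal of `G`. -/
def IsOCT (G : SimpleGraph V) (Z : Finset V) : Prop :=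
  (G.induce ((↑Z : Set V)ᶜ)).Colorable 2

/-- `G` is a `d`-quasi-forest: each connected component has a feedback
vertex set of size at most `d`. -/
def QuasiForest (G : SimpleGraph V) (d : ℕ) : Prop :=
  ∀ C : Set V, IsCompOf G Set.univ C →
    ∃ Z : Finset V, Z.card ≤ d ∧ (G.induce (C \ ↑Z)).IsAcyclic

/-- `G` is `d`-quasi-bipartite: each connected component has an odd cycle
transversal of size at most `d`. -/
def QuasiBipartite (G : SimpleGraph V) (d : ℕ) : Prop :=
  ∀ C : Set V, IsCompOf G Set.univ C →
    ∃ Z : Finset V, Z.card ≤ d ∧ (G.induce (C \ ↑Z)).Colorable 2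

/-- Feedback vertex set number of `G`. -/
noncomputable def fvsNum (G : SimpleGraph V) : ℕ :=
  sInf {n | ∃ Z : Finset V, IsFVS G Z ∧ Z.card = n}

/-- Odd cycle transversal number of `G`. -/
noncomputable def octNum (G : SimpleGraph V) : ℕ :=
  sInf {n | ∃ Z : Finset V, IsOCT G Z ∧ Z.card = n}

/-- The subgraph of `G` induced on `A` has treedepth at most `k`
(elimination-forest characterization of treedepth). -/
def tdLE (G : SimpleGraph V) : ℕ → Set V → Prop
  | 0, A => A = ∅
  | (k+1), A => ∀ C : Set V, IsCompOf G A C → ∃ v ∈ C, tdLE G k (C \ {v})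

end VCKernel

/-! Among the feasible half-integral solutions pick `x` maximizing the weight and, among
those, the number of coordinates equal to `1/2`. Let `I` be a maximum independent set and let
`D` be the set of vertices where `x` contradicts `I`: value `1` outside `I` or value `0` inside
`I`. Exchanging the `0`-vertices of `I` for the `1`-vertices outside `I` keeps `I` independent,
so the first kind is at most as numerous as the second. Every neighbour of `D` outside `D` has
value at most `1/2`, so resetting `x` to `1/2` on `D` keeps it feasible without losing weight,
and strictly increases the number of halves unless `D = ∅`. -/

namespace VCKernel

open Finset

variable {V : Type*}

lemma card_le_alpha [Fintype V] (G : SimpleGraph V) {S : Finset V} (h : IsIndep G S) :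
    #S ≤ alpha G :=
  le_csSup ⟨Fintype.card V, by rintro n ⟨S', -, -, rfl⟩; exact S'.card_le_univ⟩
    ⟨S, Set.subset_univ _, h, rfl⟩

lemma weightOn_univ [Fintype V] (x : V → ℝ) : weightOn Set.univ x = ∑ v, x v := by
  simp [weightOn]

lemma finite_halfIntOn_univ [Fintype V] : {x : V → ℝ | HalfIntOn Set.univ x}.Finite := by
  refine (Set.Finite.pi (t := fun _ => ({0, 1/2, 1} : Set ℝ))
    fun _ => by simp only [Set.finite_insert, Set.finite_singleton]).subset ?_
  intro x hx v _
  simpa using hx v (Set.mem_univ v)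

lemma isIndep_swap [Fintype V] [DecidableEq V] {G : SimpleGraph V} {x : V → ℝ}
    (hx : FeasISOn G Set.univ x) {I : Finset V} (hI : IsIndep G I) :
    IsIndep G ({v ∈ I | x v ≠ 0} ∪ (({v | x v = 1} : Finset V) \ I)) := by
  have hedge : ∀ u v, G.Adj u v → x u + x v ≤ 1 := fun u v =>
    hx.2 u (Set.mem_univ u) v (Set.mem_univ v)
  have hpos : ∀ v, 0 ≤ x v := fun v => (hx.1 v (Set.mem_univ v)).1
  intro u hu v hv huv
  simp only [mem_union, mem_filter, mem_sdiff, mem_univ, true_and] at hu hv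
  rcases hu with ⟨huI, hu0⟩ | ⟨hu1, -⟩ <;> rcases hv with ⟨hvI, hv0⟩ | ⟨hv1, -⟩
  · exact hI u huI v hvI huv
  · exact hu0 (le_antisymm (by linarith [hedge u v huv]) (hpos u))
  · exact hv0 (le_antisymm (by linarith [hedge u v huv]) (hpos v))
  · linarith [hedge u v huv]

lemma card_one_sdiff_le [Fintype V] [DecidableEq V] {G : SimpleGraph V} {x : V → ℝ}
    (hx : FeasISOn G Set.univ x) {I : Finset V} (hI : IsIndep G I) (hIcard : #I = alpha G) :
    #(({v | x v = 1} : Finset V) \ I) ≤ #{v ∈ I | x v = 0} := by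
  have hswap := card_le_alpha G (isIndep_swap hx hI)
  have hdisj : Disjoint {v ∈ I | x v ≠ 0} (({v | x v = 1} : Finset V) \ I) :=
    disjoint_left.2 fun v hv hv' => (mem_sdiff.1 hv').2 (mem_filter.1 hv).1
  rw [card_union_of_disjoint hdisj] at hswap
  have hsplit := card_filter_add_card_filter_not (s := I) (fun v => x v = 0)
  simp only [← ne_eq] at hsplit
  omega

lemma feasISOn_piecewise_half [DecidableEq V] {G : SimpleGraph V} {x : V → ℝ}
    (hx : FeasISOn G Set.univ x) (S : Finset V)
    (hS : ∀ u ∈ S, ∀ v ∉ S, G.Adj u v → x v ≤ 1/2) :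
    FeasISOn G Set.univ (S.piecewise (fun _ => 1/2) x) := by
  refine ⟨fun v _ => ?_, fun u _ v _ huv => ?_⟩
  · by_cases hv : v ∈ S
    · simp only [piecewise_eq_of_mem _ _ _ hv]; norm_num
    · simpa only [piecewise_eq_of_notMem _ _ _ hv] using hx.1 v (Set.mem_univ v)
  · by_cases hu : u ∈ S <;> by_cases hv : v ∈ S <;>
      simp only [piecewise_eq_of_mem, piecewise_eq_of_notMem, hu, hv, not_false_eq_true]
    · norm_num
    · linarith [hS u hu v hv huv]
    · linarith [hS v hv u hu huv.symm]
    · exact hx.2 u (Set.mem_univ u) v (Set.mem_univ v) huv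

lemma halfIntOn_piecewise_half [DecidableEq V] {x : V → ℝ} (hx : HalfIntOn Set.univ x)
    (S : Finset V) : HalfIntOn Set.univ (S.piecewise (fun _ => 1/2) x) := fun v _ => by
  by_cases hv : v ∈ S
  · simp [piecewise_eq_of_mem _ _ _ hv]
  · simpa [piecewise_eq_of_notMem _ _ _ hv] using hx v (Set.mem_univ v)

lemma sum_piecewise_half [Fintype V] [DecidableEq V] (S : Finset V) (x : V → ℝ) :
    ∑ v, S.piecewise (fun _ => 1/2) x v = ∑ v, x v + ∑ v ∈ S, (1/2 - x v) := by
  rw [sum_piecewise, univ_inter, ← sum_add_sum_compl S x, sum_sub_distrib, compl_eq_univ_sdiff]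
  ring

noncomputable def halfCount [Fintype V] (x : V → ℝ) : ℕ := #{v | x v = 1/2}

lemma halfCount_lt_piecewise_half [Fintype V] [DecidableEq V] {x : V → ℝ} {S : Finset V}
    (hS : S.Nonempty) (hx : ∀ v ∈ S, x v ≠ 1/2) :
    halfCount x < halfCount (S.piecewise (fun _ => 1/2) x) := by
  obtain ⟨w, hw⟩ := hS
  refine card_lt_card ((ssubset_iff_of_subset fun v hv => ?_).2 ⟨w, ?_, ?_⟩)
  · have hxv := (mem_filter.1 hv).2
    have hvS : v ∉ S := fun h => hx v h hxv
    simpa [piecewise_eq_of_notMem _ _ _ hvS] using hxv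
  · simp [piecewise_eq_of_mem _ _ _ hw]
  · simpa using hx w hw

noncomputable def lexKey [Fintype V] (x : V → ℝ) : ℝ ×ₗ ℕ := toLex (∑ v, x v, halfCount x)

lemma exists_lexKey_max [Fintype V] (G : SimpleGraph V) :
    ∃ x, FeasISOn G Set.univ x ∧ HalfIntOn Set.univ x ∧
      ∀ y, FeasISOn G Set.univ y → HalfIntOn Set.univ y → lexKey y ≤ lexKey x := by
  have hzero : FeasISOn G Set.univ 0 ∧ HalfIntOn Set.univ (0 : V → ℝ) :=
    ⟨⟨fun _ _ => by norm_num, fun _ _ _ _ _ => by norm_num⟩, fun _ _ => Or.inl rfl⟩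
  obtain ⟨x, ⟨hx, hhalf⟩, hmax⟩ :=
    Set.exists_max_image {x | FeasISOn G Set.univ x ∧ HalfIntOn Set.univ x} lexKey
      (finite_halfIntOn_univ.subset fun _ h => h.2) ⟨0, hzero⟩
  exact ⟨x, hx, hhalf, fun y hy hyhalf => hmax y ⟨hy, hyhalf⟩⟩

variable [Fintype V] [DecidableEq V]

noncomputable def disagreement (x : V → ℝ) (I : Finset V) : Finset V :=
  ({v | x v = 1} : Finset V) \ I ∪ {v ∈ I | x v = 0}

lemma mem_disagreement {x : V → ℝ} {I : Finset V} {v : V} :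
    v ∈ disagreement x I ↔ x v = 1 ∧ v ∉ I ∨ v ∈ I ∧ x v = 0 := by
  simp [disagreement]

lemma le_half_of_adj_disagreement {G : SimpleGraph V} {x : V → ℝ}
    (hx : FeasISOn G Set.univ x) (hhalf : HalfIntOn Set.univ x) {I : Finset V}
    (hI : IsIndep G I) {u v : V} (hu : u ∈ disagreement x I) (hv : v ∉ disagreement x I)
    (huv : G.Adj u v) : x v ≤ 1/2 := by
  rcases hhalf v (Set.mem_univ v) with h | h | h
  · norm_num [h]
  · exact h.le
  · have hvI : v ∈ I := by simpa [mem_disagreement, h] using hv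
    rcases mem_disagreement.1 hu with ⟨hu1, -⟩ | ⟨huI, -⟩
    · linarith [hx.2 u (Set.mem_univ u) v (Set.mem_univ v) huv]
    · exact (hI u huI v hvI huv).elim

lemma sum_le_sum_piecewise_half_disagreement {G : SimpleGraph V} {x : V → ℝ}
    (hx : FeasISOn G Set.univ x) {I : Finset V} (hI : IsIndep G I) (hIcard : #I = alpha G) :
    ∑ v, x v ≤ ∑ v, (disagreement x I).piecewise (fun _ => 1/2) x v := by
  set A : Finset V := ({v | x v = 1} : Finset V) \ I
  set B : Finset V := {v ∈ I | x v = 0}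
  have hA : ∀ v ∈ A, x v = 1 := fun v hv => by simpa using (mem_sdiff.1 hv).1
  have hB : ∀ v ∈ B, x v = 0 := fun v hv => (mem_filter.1 hv).2
  have hAB : Disjoint A B := disjoint_left.2 fun v hvA hvB => by
    simpa [hA v hvA] using hB v hvB
  have hsum : ∑ v ∈ A ∪ B, (1/2 - x v) = ((#B : ℝ) - #A) / 2 := by
    rw [sum_union hAB, sum_congr rfl fun v hv => congrArg (1/2 - ·) (hA v hv),
      sum_congr rfl fun v hv => congrArg (1/2 - ·) (hB v hv)]
    simp only [sum_const, nsmul_eq_mul]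
    ring
  have hcard : (#A : ℝ) ≤ #B := by exact_mod_cast card_one_sdiff_le hx hI hIcard
  rw [sum_piecewise_half, disagreement, hsum]
  linarith

lemma disagreement_eq_empty_of_lexKey_max {G : SimpleGraph V} {x : V → ℝ}
    (hx : FeasISOn G Set.univ x) (hhalf : HalfIntOn Set.univ x)
    (hmax : ∀ y, FeasISOn G Set.univ y → HalfIntOn Set.univ y → lexKey y ≤ lexKey x)
    {I : Finset V} (hI : IsIndep G I) (hIcard : #I = alpha G) : disagreement x I = ∅ := by
  by_contra hne
  have hcount : halfCount x < halfCount ((disagreement x I).piecewise (fun _ => 1/2) x) :=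
    halfCount_lt_piecewise_half (nonempty_iff_ne_empty.2 hne) fun v hv h => by
      rcases mem_disagreement.1 hv with ⟨h1, -⟩ | ⟨-, h0⟩
      · norm_num [h1] at h
      · norm_num [h0] at h
  refine (hmax _ (feasISOn_piecewise_half hx _ fun u hu v hv huv =>
      le_half_of_adj_disagreement hx hhalf hI hu hv huv) (halfIntOn_piecewise_half hhalf _)).not_gt
    (Prod.Lex.toLex_lt_toLex'.2 ⟨sum_le_sum_piecewise_half_disagreement hx hI hIcard,
      fun _ => hcount⟩)

/-- There exists an optimum half-integral LP(IS) solution `x` such that every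
maximum independent set `I` satisfies `V_1^x ⊆ I ⊆ V \ V_0^x`. -/
theorem stmt0 (G : SimpleGraph V) :
    ∃ x : V → ℝ, OptHIOn G Set.univ x ∧
      ∀ I : Finset V, IsIndep G I → I.card = alpha G →
        {v | x v = 1} ⊆ (↑I : Set V) ∧ (↑I : Set V) ⊆ {v | x v ≠ 0} := by
  obtain ⟨x, hx, hhalf, hmax⟩ := exists_lexKey_max G
  refine ⟨x, ⟨hx, hhalf, fun y hy hyhalf => ?_⟩, fun I hI hIcard => ?_⟩
  · rw [weightOn_univ, weightOn_univ]
    exact Prod.Lex.monotone_fst _ _ (hmax y hy hyhalf)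
  · have hD := disagreement_eq_empty_of_lexKey_max hx hhalf hmax hI hIcard
    refine ⟨fun v hv => ?_, fun v hv hv0 => ?_⟩
    · by_contra hvI
      exact notMem_empty v (hD ▸ mem_disagreement.2 (Or.inl ⟨hv, hvI⟩))
    · exact notMem_empty v (hD ▸ mem_disagreement.2 (Or.inr ⟨hv, hv0⟩))

end VCKernel
end

section
/- Let G be a finite graph and let x be an optimal half-integral solution to the LP relaxation of Independent Set on G with V_{1/2}^x inclusion-maximal among optimal half-integral solutions. Then for every nonempty subset V_0' ⊆ V_0^x, the neighborhood of V_0' within V_1^x satisfies |N(V_0') ∩ V_1^x| > |V_0'|. -/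
attribute [local instance] Classical.propDecidable

namespace VCKernel

variable {V : Type*} [Fintype V] [DecidableEq V]

/-- If `x` is an optimum half-integral LP(IS) solution with inclusion-maximal
half part, then every nonempty `V₀' ⊆ V_0^x` has `|N(V₀') ∩ V_1^x| > |V₀'|`. -/
theorem stmt1 (G : SimpleGraph V) (x : V → ℝ)
    (hx : OptHIOn G Set.univ x)
    (hmax : ¬ ∃ x' : V → ℝ, OptHIOn G Set.univ x' ∧
      {v | x v = 1/2} ⊂ {v | x' v = 1/2}) :
    ∀ V0' : Finset V, V0'.Nonempty → (↑V0' : Set V) ⊆ {v | x v = 0} →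
      V0'.card < ({v | x v = 1} ∩ nbhd G V0').ncard := by
  intro V0' hne hsub
  by_contra hcard
  push_neg at hcard
  obtain ⟨⟨hbound, hedge⟩, hhalf, hopt⟩ := hx
  have hb : ∀ v : V, 0 ≤ x v ∧ x v ≤ 1 := fun v => hbound v trivial
  have he : ∀ u v, G.Adj u v → x u + x v ≤ 1 := fun u v h =>
    hedge u trivial v trivial h
  have hh : ∀ v : V, x v = 0 ∨ x v = 1/2 ∨ x v = 1 := fun v => hhalf v trivial
  have h0 : ∀ v ∈ V0', x v = 0 := fun v hv => hsub hv
  -- if x v = 1 and v adjacent to w, then x w = 0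
  have hadj1 : ∀ v w, x v = 1 → G.Adj v w → x w = 0 := by
    intro v w hv hadj
    have h1 := he v w hadj
    have h2 := (hb w).1
    linarith
  set N1 : Set V := {v | x v = 1} ∩ nbhd G V0' with hN1def
  have hN1fin : N1.Finite := Set.toFinite _
  set T : Finset V := V0' ∪ hN1fin.toFinset with hTdef
  have hmemT : ∀ v : V, v ∈ T ↔ (v ∈ V0' ∨ v ∈ N1) := by
    intro v
    rw [hTdef, Finset.mem_union, Set.Finite.mem_toFinset]
  have hdisj : Disjoint V0' hN1fin.toFinset := by
    rw [Finset.disjoint_left]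
    intro v hv hv'
    have h1 : x v = 0 := h0 v hv
    have h2 : v ∈ N1 := hN1fin.mem_toFinset.mp hv'
    have h3 : x v = 1 := h2.1
    norm_num [h1] at h3
  -- the new solution
  set x' : V → ℝ := fun v => if v ∈ T then 1/2 else x v with hx'def
  have hx'T : ∀ v ∈ T, x' v = 1/2 := by intro v hv; simp [hx'def, hv]
  have hx'nT : ∀ v, v ∉ T → x' v = x v := by intro v hv; simp [hx'def, hv]
  -- feasibility
  have hfeas' : FeasISOn G Set.univ x' := by
    constructor
    · intro v _
      by_cases hv : v ∈ T
      · rw [hx'T v hv]; norm_num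
      · rw [hx'nT v hv]; exact hb v
    · intro u _ v _ hadj
      by_cases hu : u ∈ T <;> by_cases hv : v ∈ T
      · rw [hx'T u hu, hx'T v hv]; norm_num
      · rw [hx'T u hu, hx'nT v hv]
        rcases (hmemT u).mp hu with hu0 | hu1
        · -- u ∈ V0'; then x v ≠ 1, else v ∈ N1 ⊆ T
          have hv1 : x v ≠ 1 := by
            intro h1
            exact hv ((hmemT v).mpr (Or.inr ⟨h1, u, hu0, hadj⟩))
          rcases hh v with h | h | h
          · rw [h]; norm_num
          · rw [h]; norm_num
          · exact absurd h hv1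
        · have := hadj1 u v hu1.1 hadj
          rw [this]; norm_num
      · rw [hx'nT u hu, hx'T v hv]
        rcases (hmemT v).mp hv with hv0 | hv1
        · have hu1 : x u ≠ 1 := by
            intro h1
            exact hu ((hmemT u).mpr (Or.inr ⟨h1, v, hv0, hadj.symm⟩))
          rcases hh u with h | h | h
          · rw [h]; norm_num
          · rw [h]; norm_num
          · exact absurd h hu1
        · have := hadj1 v u hv1.1 hadj.symm
          rw [this]; norm_num
      · rw [hx'nT u hu, hx'nT v hv]; exact he u v hadj
  -- half-integrality
  have hhalf' : HalfIntOn Set.univ x' := by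
    intro v _
    by_cases hv : v ∈ T
    · rw [hx'T v hv]; right; left; rfl
    · rw [hx'nT v hv]; exact hh v
  -- cardinality of N1
  have hN1card : hN1fin.toFinset.card = N1.ncard := (Set.ncard_eq_toFinset_card _ hN1fin).symm
  -- weight comparison
  have hwle : weightOn Set.univ x ≤ weightOn Set.univ x' := by
    have hdiff : ∑ v, (x' v - x v) = ∑ v ∈ T, (x' v - x v) := by
      refine (Finset.sum_subset (Finset.subset_univ T) ?_).symm
      intro v _ hv
      rw [hx'nT v hv]; ring
    have hsplit : ∑ v ∈ T, (x' v - x v)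
        = ∑ v ∈ V0', (x' v - x v) + ∑ v ∈ hN1fin.toFinset, (x' v - x v) := by
      rw [hTdef, Finset.sum_union hdisj]
    have hs1 : ∑ v ∈ V0', (x' v - x v) = (V0'.card : ℝ) * (1/2) := by
      rw [Finset.sum_congr rfl (fun v hv => ?_), Finset.sum_const, nsmul_eq_mul]
      have hvT : v ∈ T := (hmemT v).mpr (Or.inl hv)
      rw [hx'T v hvT, h0 v hv]; ring
    have hs2 : ∑ v ∈ hN1fin.toFinset, (x' v - x v)
        = (hN1fin.toFinset.card : ℝ) * (-(1/2)) := by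
      rw [Finset.sum_congr rfl (fun v hv => ?_), Finset.sum_const, nsmul_eq_mul]
      have hvN : v ∈ N1 := hN1fin.mem_toFinset.mp hv
      have hvT : v ∈ T := (hmemT v).mpr (Or.inr hvN)
      rw [hx'T v hvT, hvN.1]; ring
    have hle : (0:ℝ) ≤ ∑ v, (x' v - x v) := by
      rw [hdiff, hsplit, hs1, hs2, hN1card]
      have : (N1.ncard : ℝ) ≤ (V0'.card : ℝ) := by exact_mod_cast hcard
      linarith
    have hsum : weightOn Set.univ x' - weightOn Set.univ x = ∑ v, (x' v - x v) := by
      simp [weightOn, Finset.sum_sub_distrib]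
    linarith
  -- x' is optimal
  have hopt' : OptHIOn G Set.univ x' :=
    ⟨hfeas', hhalf', fun y hy hhy => le_trans (hopt y hy hhy) hwle⟩
  -- strict growth of half part
  apply hmax
  refine ⟨x', hopt', ?_, ?_⟩
  · intro v hv
    have hv2 : x v = 1/2 := hv
    have hvT : v ∉ T := by
      intro hvT
      rcases (hmemT v).mp hvT with h | h
      · rw [h0 v h] at hv2; norm_num at hv2
      · rw [h.1] at hv2; norm_num at hv2
    show x' v = 1/2
    rw [hx'nT v hvT]; exact hv2
  · obtain ⟨u, hu⟩ := hne
    intro hsubset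
    have huT : u ∈ T := (hmemT u).mpr (Or.inl hu)
    have h1 : x' u = 1/2 := hx'T u huT
    have h2 : x u = 1/2 := hsubset h1
    rw [h0 u hu] at h2; norm_num at h2

end VCKernel
end

section
/- Let H be a graph with a minimal blocking set Y. Then for every vertex y ∈ Y there exists a maximum independent set I_y of H with I_y ∩ Y = {y}, and moreover I_y \ {y} is a maximum independent set of H - Y. -/
attribute [local instance] Classical.propDecidable

namespace VCKernel

variable {V : Type*} [Fintype V] [DecidableEq V]

lemma alphaOn_bdd (G : SimpleGraph V) (A : Set V) :
    BddAbove {n | ∃ S : Finset V, ↑S ⊆ A ∧ IsIndep G S ∧ S.card = n} := by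
  refine ⟨Fintype.card V, fun n hn => ?_⟩
  obtain ⟨S, -, -, rfl⟩ := hn
  exact S.card_le_univ

lemma le_alphaOn (G : SimpleGraph V) (A : Set V) (S : Finset V)
    (hS : ↑S ⊆ A) (hI : IsIndep G S) : S.card ≤ alphaOn G A :=
  le_csSup (alphaOn_bdd G A) ⟨S, hS, hI, rfl⟩

lemma alphaOn_exists (G : SimpleGraph V) (A : Set V) :
    ∃ S : Finset V, ↑S ⊆ A ∧ IsIndep G S ∧ S.card = alphaOn G A := by
  have hne : {n | ∃ S : Finset V, ↑S ⊆ A ∧ IsIndep G S ∧ S.card = n}.Nonempty :=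
    ⟨0, ∅, by simp, fun u hu => by simp at hu, rfl⟩
  exact Nat.sSup_mem hne (alphaOn_bdd G A)

lemma alphaOn_mono (G : SimpleGraph V) {A B : Set V} (h : A ⊆ B) :
    alphaOn G A ≤ alphaOn G B := by
  obtain ⟨S, hS, hI, hc⟩ := alphaOn_exists G A
  exact hc ▸ le_alphaOn G B S (hS.trans h) hI

/-- For a minimal blocking set `Y` and every `y ∈ Y` there is a maximum
independent set `I_y` of `G` with `I_y ∩ Y = {y}`, and `I_y \ {y}` is a
maximum independent set of `G - Y`. -/
theorem stmt3 (G : SimpleGraph V) (Y : Finset V) (hY : IsMinBlocking G Y) :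
    ∀ y ∈ Y, ∃ I : Finset V, IsIndep G I ∧ I.card = alpha G ∧
      I ∩ Y = {y} ∧ (I.erase y).card = alphaOn G (Set.univ \ ↑Y) := by
  intro y hy
  have hblock : alphaOn G (Set.univ \ ↑Y) < alpha G := hY.1
  have hsub : Y.erase y ⊂ Y := Finset.erase_ssubset hy
  have hnb : ¬ IsBlocking G (Y.erase y) := hY.2 _ hsub
  have heq : alphaOn G (Set.univ \ ↑(Y.erase y)) = alpha G := by
    have h1 : alphaOn G (Set.univ \ ↑(Y.erase y)) ≤ alpha G :=
      alphaOn_mono G (Set.diff_subset.trans (subset_refl _))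
    have h2 : ¬ alphaOn G (Set.univ \ ↑(Y.erase y)) < alpha G := hnb
    omega
  obtain ⟨I, hIsub, hIind, hIcard⟩ := alphaOn_exists G (Set.univ \ ↑(Y.erase y))
  rw [heq] at hIcard
  have hyI : y ∈ I := by
    by_contra hyI
    have hIY : (↑I : Set V) ⊆ Set.univ \ ↑Y := by
      intro z hz
      refine ⟨trivial, fun hzY => ?_⟩
      have := (hIsub hz).2
      rcases eq_or_ne z y with rfl | hne
      · exact hyI hz
      · exact this (Finset.mem_erase.mpr ⟨hne, hzY⟩)
    have := le_alphaOn G (Set.univ \ (↑Y : Set V)) I hIY hIind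
    omega
  have heraseSub : (↑(I.erase y) : Set V) ⊆ Set.univ \ ↑Y := by
    intro z hz
    have hz' := Finset.mem_coe.mp hz
    have hzne := Finset.ne_of_mem_erase hz'
    have hzI := Finset.mem_of_mem_erase hz'
    refine ⟨trivial, fun hzY => (hIsub hzI).2 (Finset.mem_erase.mpr ⟨hzne, hzY⟩)⟩
  have heraseInd : IsIndep G (I.erase y) := fun u hu v hv =>
    hIind u (Finset.mem_of_mem_erase hu) v (Finset.mem_of_mem_erase hv)
  have heraseCard : (I.erase y).card = I.card - 1 := Finset.card_erase_of_mem hyI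
  have hge : alpha G - 1 ≤ alphaOn G (Set.univ \ ↑Y) := by
    have := le_alphaOn G (Set.univ \ (↑Y : Set V)) (I.erase y) heraseSub heraseInd
    omega
  refine ⟨I, hIind, hIcard, ?_, by omega⟩
  ext z
  simp only [Finset.mem_inter, Finset.mem_singleton]
  constructor
  · rintro ⟨hzI, hzY⟩
    by_contra hne
    exact (hIsub hzI).2 (Finset.mem_erase.mpr ⟨hne, hzY⟩)
  · rintro rfl; exact ⟨hyI, hy⟩

end VCKernel
end

section
/- Let G be a graph, X ⊆ V(G), and H a connected component of G - X with α(H) - α(H - S) ≤ 0 for S = N(X ∩ I') ∩ V(H), where I' is an independent set of G - V(H). Then there exists an independent set of G of size |I'| + α(H). -/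
attribute [local instance] Classical.propDecidable

namespace VCKernel

variable {V : Type*} [Fintype V] [DecidableEq V]

/-- If `C` is a connected component of `G - X`, `I'` is an independent set of
`G` avoiding `C`, and `α(C) - α(C - S) ≤ 0` for `S = N(X ∩ I') ∩ C`, then `G`
has an independent set of size `|I'| + α(C)`. -/
theorem stmt18 (G : SimpleGraph V) (X : Finset V) (C : Set V)
    (hC : IsCompOf G (Set.univ \ ↑X) C)
    (I' : Finset V) (hdisj : ∀ v ∈ I', v ∉ C) (hI' : IsIndep G I')
    (hS : alphaOn G C ≤ alphaOn G (C \ nbhd G (X ∩ I'))) :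
    ∃ I : Finset V, IsIndep G I ∧ I.card = I'.card + alphaOn G C := by
  -- the defining set of alphaOn is nonempty and bounded, so the sSup is attained
  have hmem : ∀ A : Set V, ∃ S : Finset V, ↑S ⊆ A ∧ IsIndep G S ∧
      S.card = alphaOn G A := by
    intro A
    have hne : ({n | ∃ S : Finset V, ↑S ⊆ A ∧ IsIndep G S ∧ S.card = n}).Nonempty :=
      ⟨0, ∅, by simp [IsIndep]⟩
    have hbdd : BddAbove {n | ∃ S : Finset V, ↑S ⊆ A ∧ IsIndep G S ∧ S.card = n} := by
      refine ⟨Fintype.card V, ?_⟩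
      rintro n ⟨S, -, -, rfl⟩
      exact S.card_le_univ.trans (by simp)
    exact Nat.sSup_mem hne hbdd
  obtain ⟨J, hJsub, hJind, hJcard⟩ := hmem (C \ nbhd G (X ∩ I'))
  -- J has card exactly alphaOn G C
  have hle : alphaOn G (C \ nbhd G (X ∩ I')) ≤ alphaOn G C := by
    have hbdd : BddAbove {n | ∃ S : Finset V, ↑S ⊆ C ∧ IsIndep G S ∧ S.card = n} := by
      refine ⟨Fintype.card V, ?_⟩
      rintro n ⟨S, -, -, rfl⟩
      exact S.card_le_univ.trans (by simp)
    refine csSup_le_csSup hbdd ⟨0, ∅, by simp [IsIndep]⟩ ?_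
    rintro n ⟨S, hS1, hS2, rfl⟩
    exact ⟨S, hS1.trans Set.diff_subset, hS2, rfl⟩
  have hJcard' : J.card = alphaOn G C := by omega
  -- J and I' are disjoint
  have hdisjJ : Disjoint I' J := by
    rw [Finset.disjoint_left]
    intro v hvI' hvJ
    exact hdisj v hvI' (hJsub hvJ).1
  refine ⟨I' ∪ J, ?_, ?_⟩
  · intro u hu v hv hadj
    rcases Finset.mem_union.1 hu with hu | hu <;>
      rcases Finset.mem_union.1 hv with hv | hv
    · exact hI' u hu v hv hadj
    · -- u ∈ I', v ∈ J ⊆ C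
      have hvC := hJsub hv
      by_cases hx : u ∈ X
      · exact hvC.2 ⟨u, Finset.mem_inter.2 ⟨hx, hu⟩, hadj⟩
      · have : u ∈ C := hC.2.2 v hvC.1 u ⟨trivial, by simpa using hx⟩ hadj.symm
        exact hdisj u hu this
    · have huC := hJsub hu
      by_cases hx : v ∈ X
      · exact huC.2 ⟨v, Finset.mem_inter.2 ⟨hx, hv⟩, hadj.symm⟩
      · have : v ∈ C := hC.2.2 u huC.1 v ⟨trivial, by simpa using hx⟩ hadj
        exact hdisj v hv this
    · exact hJind u hu v hv hadj
  · rw [Finset.card_union_of_disjoint hdisjJ, hJcard']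

end VCKernel
end
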